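/- Right-shift schedules dominate realised schedules pointwise: let s¹, s² be baseline schedules with the same permutation π such that s¹_{π(q)} = s²_{π(q)} and s¹_{π(k)} ≤ s²_{π(k)} for k < q. Then for every scenario Δ with t := R(s¹,Δ)_{π(q)}, the right-shift schedule Ŝ = RS(s²,q,t) satisfies Ŝ_{π(q)} = R(s¹,Δ)_{π(q)} and R(s¹,Δ)_{π(k)} ≤ Ŝ_{π(k)} for all k < q. -/

import Mathlib

/-- Length of the intersection of integer intervals [a1,b1] and [a2,b2]. -/
def lenint (a1 b1 a2 b2 : ℤ) : ℤ := max 0 (min b1 b2 - max a1 a2)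

/-- Realised schedule: position-indexed recursive definition.
`p` processing times (operation-indexed), `π` permutation of operations,
`s` baseline start times (operation-indexed), `Δ` deviations (operation-indexed). -/
def realised (p : ℕ → ℤ) (π : Equiv.Perm ℕ) (s Δ : ℕ → ℤ) : ℕ → ℤ
  | 0 => s (π 0) + Δ (π 0)
  | k + 1 => max (s (π (k + 1))) (realised p π s Δ k + p (π k)) + Δ (π (k + 1))

/-- Latest start time schedule (position-indexed). -/
def latest (p : ℕ → ℤ) (π : Equiv.Perm ℕ) (s : ℕ → ℤ) (Δmax : ℤ) : ℕ → ℤ :=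
  realised p π s (fun _ => Δmax)

/-- A scenario: all deviations in {0,…,Δmax}. -/
def IsScenario (Δmax : ℤ) (Δ : ℕ → ℤ) : Prop := ∀ j, 0 ≤ Δ j ∧ Δ j ≤ Δmax

/-- Auxiliary function for the right-shift schedule: `j` is the distance from
position `q`, i.e. the value at position `q - j`. -/
def rsAux (p : ℕ → ℤ) (π : Equiv.Perm ℕ) (L : ℕ → ℤ) (q : ℕ) (t : ℤ) : ℕ → ℤ
  | 0 => t
  | j + 1 => min (L (q - (j + 1))) (rsAux p π L q t j - p (π (q - (j + 1))))

/-- Right-shift schedule (position-indexed, meaningful for positions `k ≤ q`). -/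
def rightShift (p : ℕ → ℤ) (π : Equiv.Perm ℕ) (L : ℕ → ℤ) (q : ℕ) (t : ℤ) (k : ℕ) : ℤ :=
  rsAux p π L q t (q - k)

/-!
The realised schedule of `s₁` under `Δ` is itself a schedule that stays below the latest
schedule `L` of `s₂` before position `q` (realised schedules are monotone in the baseline and
the deviations) and respects the precedence constraints `S k + p (π k) ≤ S (k + 1)`. The
right-shift schedule ending at `t` is the pointwise largest such schedule, since its recursion
takes the minimum of exactly these two upper bounds.
-/

section Realised

variable (p : ℕ → ℤ) (π : Equiv.Perm ℕ)

lemma realised_mono {s s' Δ Δ' : ℕ → ℤ} (hΔ : ∀ j, Δ j ≤ Δ' j) :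
    ∀ k, (∀ i ≤ k, s (π i) ≤ s' (π i)) → realised p π s Δ k ≤ realised p π s' Δ' k
  | 0, hs => add_le_add (hs 0 le_rfl) (hΔ _)
  | k + 1, hs =>
    have ih := realised_mono hΔ k fun i hi => hs i (hi.trans k.le_succ)
    add_le_add (max_le_max (hs _ le_rfl) (by linarith)) (hΔ _)

lemma realised_add_le_succ {s Δ : ℕ → ℤ} (hΔ : ∀ j, 0 ≤ Δ j) (k : ℕ) :
    realised p π s Δ k + p (π k) ≤ realised p π s Δ (k + 1) := by
  have := le_max_right (s (π (k + 1))) (realised p π s Δ k + p (π k))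
  have := hΔ (π (k + 1))
  simp only [realised]
  linarith

end Realised

section RightShift

variable (p : ℕ → ℤ) (π : Equiv.Perm ℕ) (L : ℕ → ℤ) (q : ℕ) (t : ℤ)

@[simp]
lemma rightShift_self : rightShift p π L q t q = t := by
  simp [rightShift, rsAux]

lemma le_rsAux {S : ℕ → ℤ} (hSL : ∀ k < q, S k ≤ L k)
    (hSp : ∀ k < q, S k + p (π k) ≤ S (k + 1)) (hSt : S q ≤ t) :
    ∀ d ≤ q, S (q - d) ≤ rsAux p π L q t d
  | 0, _ => hSt
  | d + 1, hd => by
    have ih := le_rsAux hSL hSp hSt d (by omega)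
    have hstep := hSp (q - (d + 1)) (by omega)
    rw [show q - (d + 1) + 1 = q - d by omega] at hstep
    rw [rsAux]
    exact le_min (hSL _ (by omega)) (by linarith)

lemma le_rightShift {S : ℕ → ℤ} (hSL : ∀ k < q, S k ≤ L k)
    (hSp : ∀ k < q, S k + p (π k) ≤ S (k + 1)) (hSt : S q ≤ t) {k : ℕ} (hk : k ≤ q) :
    S k ≤ rightShift p π L q t k := by
  have := le_rsAux p π L q t hSL hSp hSt (q - k) (Nat.sub_le q k)
  rwa [Nat.sub_sub_self hk] at this

end RightShift

theorem rightShift_dominates_realised_general (p s₁ s₂ Δ : ℕ → ℤ) (π : Equiv.Perm ℕ)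
    (Δmax : ℤ) (hΔ : IsScenario Δmax Δ)
    (q : ℕ) (hle : ∀ k < q, s₁ (π k) ≤ s₂ (π k)) :
    rightShift p π (latest p π s₂ Δmax) q (realised p π s₁ Δ q) q
      = realised p π s₁ Δ q ∧
    ∀ k < q, realised p π s₁ Δ k ≤
      rightShift p π (latest p π s₂ Δmax) q (realised p π s₁ Δ q) k := by
  have below_latest : ∀ k < q, realised p π s₁ Δ k ≤ latest p π s₂ Δmax k := fun k hk =>
    realised_mono p π (fun j => (hΔ j).2) k fun i hi => hle i (by omega)
  exact ⟨rightShift_self .., fun k hk => le_rightShift p π _ q _ below_latest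
    (fun k _ => realised_add_le_succ p π (fun j => (hΔ j).1) k) le_rfl hk.le⟩

theorem rightShift_dominates_realised (p s₁ s₂ Δ : ℕ → ℤ) (π : Equiv.Perm ℕ)
    (Δmax : ℤ) (hp : ∀ j, 0 < p j) (hΔmax : 0 ≤ Δmax) (hΔ : IsScenario Δmax Δ)
    (q : ℕ) (heq : s₁ (π q) = s₂ (π q)) (hle : ∀ k < q, s₁ (π k) ≤ s₂ (π k)) :
    rightShift p π (latest p π s₂ Δmax) q (realised p π s₁ Δ q) q
      = realised p π s₁ Δ q ∧
    ∀ k < q, realised p π s₁ Δ k ≤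
      rightShift p π (latest p π s₂ Δmax) q (realised p π s₁ Δ q) k :=
  rightShift_dominates_realised_general p s₁ s₂ Δ π Δmax hΔ q hle
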